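/- For n ≥ 4 and k ≥ 2, the number R(n,k) of k-element subsets of n circularly arranged objects containing no three objects in consecutive positions satisfies R(n,k) = L(n−1,k) + 2·L(n−4,k−2) + L(n−3,k−1), where L(m,j) is the corresponding count for m linearly arranged objects. -/
import Mathlib


open Classical in
/-- `L(m, j)`: the number of `j`-element subsets of `m` linearly arranged positions
containing no three consecutive positions. -/
noncomputable def linNoThree (m j : ℕ) : ℕ :=
  (Finset.univ.filter fun s : Finset (Fin m) =>
    s.card = j ∧
      ¬∃ a ∈ s, ∃ b ∈ s, ∃ c ∈ s, (b : ℕ) = (a : ℕ) + 1 ∧ (c : ℕ) = (a : ℕ) + 2).card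

open Classical in
/-- `R(n, k)`: the number of `k`-element subsets of `n` circularly arranged positions
containing no three cyclically consecutive positions. -/
noncomputable def circNoThree (n k : ℕ) : ℕ :=
  (Finset.univ.filter fun s : Finset (Fin n) =>
    s.card = k ∧
      ¬∃ a ∈ s, ∃ b ∈ s, ∃ c ∈ s,
        (b : ℕ) = ((a : ℕ) + 1) % n ∧ (c : ℕ) = ((a : ℕ) + 2) % n).card

open Classical in
private noncomputable def SlN (m j : ℕ) : Finset (Finset ℕ) :=
  (Finset.range m).powerset.filter fun s =>
    s.card = j ∧ ∀ a : ℕ, ¬(a ∈ s ∧ a + 1 ∈ s ∧ a + 2 ∈ s)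
open Classical in
private noncomputable def ScN (n k : ℕ) : Finset (Finset ℕ) :=
  (Finset.range n).powerset.filter fun s =>
    s.card = k ∧ ∀ a : ℕ, ¬(a ∈ s ∧ (a+1) % n ∈ s ∧ (a+2) % n ∈ s)
private lemma mem_SlN {m j : ℕ} {s : Finset ℕ} :
    s ∈ SlN m j ↔ (∀ x ∈ s, x < m) ∧ s.card = j ∧
      ∀ a : ℕ, ¬(a ∈ s ∧ a + 1 ∈ s ∧ a + 2 ∈ s) := by
  simp [SlN, Finset.mem_filter, Finset.mem_powerset, Finset.subset_iff, and_assoc]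
private lemma mem_ScN {n k : ℕ} {s : Finset ℕ} :
    s ∈ ScN n k ↔ (∀ x ∈ s, x < n) ∧ s.card = k ∧
      ∀ a : ℕ, ¬(a ∈ s ∧ (a+1) % n ∈ s ∧ (a+2) % n ∈ s) := by
  simp [ScN, Finset.mem_filter, Finset.mem_powerset, Finset.subset_iff, and_assoc]
private lemma mod1 (n a : ℕ) (h : a < n) :
    ((a+1) % n = a+1 ∧ a+1 < n) ∨ ((a+1) % n = 0 ∧ a+1 = n) := by
  rcases Nat.lt_or_ge (a+1) n with h1 | h1
  · exact Or.inl ⟨Nat.mod_eq_of_lt h1, h1⟩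
  · have he : a + 1 = n := by omega
    exact Or.inr ⟨by rw [he]; exact Nat.mod_self n, he⟩
private lemma mod2 (n a : ℕ) (hn : 2 ≤ n) (h : a < n) :
    ((a+2) % n = a+2 ∧ a+2 < n) ∨ ((a+2) % n = 0 ∧ a+2 = n) ∨
      ((a+2) % n = 1 ∧ a+1 = n) := by
  rcases Nat.lt_or_ge (a+2) n with h1 | h1
  · exact Or.inl ⟨Nat.mod_eq_of_lt h1, h1⟩
  rcases Nat.lt_or_ge n (a+2) with h2 | h2
  · have ha : a + 1 = n := by omega
    have he : a + 2 = n + 1 := by omega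
    refine Or.inr (Or.inr ⟨?_, ha⟩)
    rw [he, Nat.add_mod_left]
    exact Nat.mod_eq_of_lt (by omega)
  · have he : a + 2 = n := by omega
    exact Or.inr (Or.inl ⟨by rw [he]; exact Nat.mod_self n, he⟩)

open Classical in
private lemma caseA (n k : ℕ) (hn : 4 ≤ n) :
    (ScN n k).filter (fun s => (n-1) ∉ s) = SlN (n-1) k := by
  ext s
  simp only [Finset.mem_filter, mem_ScN, mem_SlN]
  constructor
  · rintro ⟨⟨hsub, hcard, hok⟩, hmem⟩
    refine ⟨?_, hcard, ?_⟩
    · intro x hx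
      have h1 := hsub x hx
      have h2 : x ≠ n-1 := fun h => hmem (h ▸ hx)
      omega
    · rintro a ⟨h1, h2, h3⟩
      have ha : a < n := hsub a h1
      have hb : a + 1 < n := by
        have := hsub _ h2
        have : a + 1 ≠ n - 1 := fun h => hmem (h ▸ h2)
        omega
      have hc : a + 2 < n := by
        have := hsub _ h3
        have : a + 2 ≠ n - 1 := fun h => hmem (h ▸ h3)
        omega
      exact hok a ⟨h1, by rw [Nat.mod_eq_of_lt hb]; exact h2,
        by rw [Nat.mod_eq_of_lt hc]; exact h3⟩
  · rintro ⟨hsub, hcard, hok⟩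
    have hlast : (n-1) ∉ s := fun h => by have := hsub _ h; omega
    refine ⟨⟨fun x hx => by have := hsub x hx; omega, hcard, ?_⟩, hlast⟩
    rintro a ⟨h1, h2, h3⟩
    have ha : a < n - 1 := hsub a h1
    rcases mod1 n a (by omega) with ⟨e1, l1⟩ | ⟨e1, l1⟩
    · rw [e1] at h2
      have hb := hsub _ h2
      rcases mod2 n a (by omega) (by omega) with ⟨e2, l2⟩ | ⟨e2, l2⟩ | ⟨e2, l2⟩
      · rw [e2] at h3
        exact hok a ⟨h1, h2, h3⟩
      · omega
      · omega
    · omega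

private lemma image_sub_add (c : ℕ) (s : Finset ℕ) (h : ∀ x ∈ s, c ≤ x) :
    (s.image (· - c)).image (· + c) = s := by
  ext x
  simp only [Finset.mem_image]
  constructor
  · rintro ⟨y, ⟨z, hz, rfl⟩, rfl⟩
    have := h z hz
    simpa [Nat.sub_add_cancel this] using hz
  · intro hx
    exact ⟨x - c, ⟨x, hx, rfl⟩, Nat.sub_add_cancel (h x hx)⟩

private lemma image_add_sub (c : ℕ) (t : Finset ℕ) :
    (t.image (· + c)).image (· - c) = t := by
  ext x
  simp only [Finset.mem_image]
  constructor
  · rintro ⟨y, ⟨z, hz, rfl⟩, rfl⟩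
    simpa using hz
  · intro hx
    exact ⟨x + c, ⟨x, hx, rfl⟩, by omega⟩

private lemma sub_injOn (c : ℕ) (s : Finset ℕ) (h : ∀ x ∈ s, c ≤ x) :
    Set.InjOn (· - c) ↑s := by
  intro x hx y hy hxy
  have := h x hx
  have := h y hy
  simp only at hxy
  omega

open Classical in
private lemma caseB (n k : ℕ) (hn : 4 ≤ n) (hk : 2 ≤ k) :
    ((ScN n k).filter (fun s => (n-1) ∈ s ∧ (n-2) ∉ s ∧ (0:ℕ) ∉ s)).card
      = (SlN (n-3) (k-1)).card := by
  refine Finset.card_bij' (fun s _ => (s.erase (n-1)).image (· - 1))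
    (fun t _ => insert (n-1) (t.image (· + 1))) ?_ ?_ ?_ ?_
  · -- forward membership
    intro s hs
    simp only [Finset.mem_filter, mem_ScN] at hs
    obtain ⟨⟨hsub, hcard, hok⟩, hm1, hm2, hm0⟩ := hs
    -- structure of erase
    have hel : ∀ x ∈ s.erase (n-1), 1 ≤ x ∧ x ≤ n - 3 := by
      intro x hx
      rw [Finset.mem_erase] at hx
      have h1 := hsub x hx.2
      have h2 : x ≠ n - 2 := fun h => hm2 (h ▸ hx.2)
      have h0 : x ≠ 0 := fun h => hm0 (h ▸ hx.2)
      have := hx.1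
      omega
    rw [mem_SlN]
    refine ⟨?_, ?_, ?_⟩
    · intro x hx
      rw [Finset.mem_image] at hx
      obtain ⟨y, hy, rfl⟩ := hx
      have := hel y hy
      omega
    · rw [Finset.card_image_of_injOn (sub_injOn 1 _ (fun x hx => (hel x hx).1)),
        Finset.card_erase_of_mem hm1, hcard]
    · rintro a ⟨h1, h2, h3⟩
      rw [Finset.mem_image] at h1 h2 h3
      obtain ⟨y1, hy1, e1⟩ := h1
      obtain ⟨y2, hy2, e2⟩ := h2
      obtain ⟨y3, hy3, e3⟩ := h3
      have b1 := hel y1 hy1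
      have b2 := hel y2 hy2
      have b3 := hel y3 hy3
      have : y1 = a + 1 := by omega
      have : y2 = a + 2 := by omega
      have : y3 = a + 3 := by omega
      subst this; subst ‹y2 = a + 2›; subst ‹y1 = a + 1›
      rw [Finset.mem_erase] at hy1 hy2 hy3
      refine hok (a+1) ⟨hy1.2, ?_, ?_⟩
      · rw [Nat.mod_eq_of_lt (by omega)]; exact hy2.2
      · rw [show a+1+2 = a+3 by omega, Nat.mod_eq_of_lt (by omega)]; exact hy3.2
  · -- backward membership
    intro t ht
    rw [mem_SlN] at ht
    obtain ⟨hsub, hcard, hok⟩ := ht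
    have hmem : ∀ x, x ∈ insert (n-1) (t.image (· + 1)) ↔
        x = n-1 ∨ ∃ y ∈ t, y + 1 = x := by
      intro x; simp [Finset.mem_insert, Finset.mem_image]
    have hbd : ∀ x, x ∈ insert (n-1) (t.image (· + 1)) → x = n-1 ∨ (1 ≤ x ∧ x ≤ n-3) := by
      intro x hx
      rcases (hmem x).mp hx with h | ⟨y, hy, rfl⟩
      · exact Or.inl h
      · have := hsub y hy; right; omega
    have hni : (n-1) ∉ t.image (· + 1) := by
      rw [Finset.mem_image]
      rintro ⟨y, hy, e⟩
      have := hsub y hy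
      omega
    simp only [Finset.mem_filter, mem_ScN]
    refine ⟨⟨?_, ?_, ?_⟩, ?_, ?_, ?_⟩
    · intro x hx
      rcases hbd x hx with h | h <;> omega
    · rw [Finset.card_insert_of_notMem hni,
        Finset.card_image_of_injective _ (add_left_injective 1), hcard]
      omega
    · -- circular condition
      rintro a ⟨h1, h2, h3⟩
      rcases hbd a h1 with rfl | ⟨ha1, ha2⟩
      · -- a = n-1 : (a+1)%n = 0
        have e : (n-1+1) % n = 0 := by
          rw [show n-1+1 = n by omega, Nat.mod_self]
        rw [e] at h2
        rcases hbd 0 h2 with h | h <;> omega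
      · -- 1 ≤ a ≤ n-3
        have e1 : (a+1) % n = a+1 := Nat.mod_eq_of_lt (by omega)
        have e2 : (a+2) % n = a+2 := Nat.mod_eq_of_lt (by omega)
        rw [e1] at h2; rw [e2] at h3
        rcases hbd _ h2 with hb | hb
        · -- a+1 = n-1, so a = n-2 > n-3, contradiction
          omega
        rcases hbd _ h3 with hc | hc
        · omega
        -- all three in the image
        have m1 : ∃ y ∈ t, y + 1 = a := by
          rcases (hmem a).mp h1 with h | h
          · omega
          · exact h
        have m2 : ∃ y ∈ t, y + 1 = a + 1 := by
          rcases (hmem _).mp h2 with h | h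
          · omega
          · exact h
        have m3 : ∃ y ∈ t, y + 1 = a + 2 := by
          rcases (hmem _).mp h3 with h | h
          · omega
          · exact h
        obtain ⟨y1, hy1, e1'⟩ := m1
        obtain ⟨y2, hy2, e2'⟩ := m2
        obtain ⟨y3, hy3, e3'⟩ := m3
        refine hok (a-1) ⟨by rwa [show a-1 = y1 by omega], ?_, ?_⟩
        · rwa [show a-1+1 = y2 by omega]
        · rwa [show a-1+2 = y3 by omega]
    · exact Finset.mem_insert_self _ _
    · intro h
      rcases hbd _ h with h' | h' <;> omega
    · intro h
      rcases hbd _ h with h' | h' <;> omega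
  · -- left inverse
    intro s hs
    simp only [Finset.mem_filter, mem_ScN] at hs
    obtain ⟨⟨hsub, hcard, hok⟩, hm1, hm2, hm0⟩ := hs
    show insert (n-1) (((s.erase (n-1)).image (· - 1)).image (· + 1)) = s
    rw [image_sub_add 1 _ (fun x hx => by
      rw [Finset.mem_erase] at hx
      have : x ≠ 0 := fun h => hm0 (h ▸ hx.2)
      omega)]
    exact Finset.insert_erase hm1
  · -- right inverse
    intro t ht
    rw [mem_SlN] at ht
    have hni : (n-1) ∉ t.image (· + 1) := by
      rw [Finset.mem_image]
      rintro ⟨y, hy, e⟩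
      have := ht.1 y hy
      omega
    show ((insert (n-1) (t.image (· + 1))).erase (n-1)).image (· - 1) = t
    rw [Finset.erase_insert hni, image_add_sub]

open Classical in
private lemma caseC (n k : ℕ) (hn : 4 ≤ n) (hk : 2 ≤ k) :
    ((ScN n k).filter (fun s => (n-1) ∈ s ∧ (n-2) ∈ s)).card
      = (SlN (n-4) (k-2)).card := by
  refine Finset.card_bij' (fun s _ => ((s.erase (n-1)).erase (n-2)).image (· - 1))
    (fun t _ => insert (n-1) (insert (n-2) (t.image (· + 1)))) ?_ ?_ ?_ ?_
  · intro s hs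
    simp only [Finset.mem_filter, mem_ScN] at hs
    obtain ⟨⟨hsub, hcard, hok⟩, hm1, hm2⟩ := hs
    have h0 : (0:ℕ) ∉ s := fun h => hok (n-2) ⟨hm2,
      by rw [show n-2+1 = n-1 by omega, Nat.mod_eq_of_lt (by omega)]; exact hm1,
      by rw [show n-2+2 = n by omega, Nat.mod_self]; exact h⟩
    have h3 : (n-3) ∉ s := fun h => hok (n-3) ⟨h,
      by rw [show n-3+1 = n-2 by omega, Nat.mod_eq_of_lt (by omega)]; exact hm2,
      by rw [show n-3+2 = n-1 by omega, Nat.mod_eq_of_lt (by omega)]; exact hm1⟩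
    have hel : ∀ x ∈ (s.erase (n-1)).erase (n-2), 1 ≤ x ∧ x ≤ n - 4 := by
      intro x hx
      rw [Finset.mem_erase, Finset.mem_erase] at hx
      obtain ⟨hx2, hx1, hxs⟩ := hx
      have := hsub x hxs
      have : x ≠ 0 := fun h => h0 (h ▸ hxs)
      have : x ≠ n-3 := fun h => h3 (h ▸ hxs)
      omega
    rw [mem_SlN]
    refine ⟨?_, ?_, ?_⟩
    · intro x hx
      rw [Finset.mem_image] at hx
      obtain ⟨y, hy, rfl⟩ := hx
      have := hel y hy
      omega
    · rw [Finset.card_image_of_injOn (sub_injOn 1 _ (fun x hx => (hel x hx).1)),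
        Finset.card_erase_of_mem (Finset.mem_erase.mpr ⟨by omega, hm2⟩),
        Finset.card_erase_of_mem hm1, hcard]
      omega
    · rintro a ⟨h1, h2, h3'⟩
      rw [Finset.mem_image] at h1 h2 h3'
      obtain ⟨y1, hy1, e1⟩ := h1
      obtain ⟨y2, hy2, e2⟩ := h2
      obtain ⟨y3, hy3, e3⟩ := h3'
      have b1 := hel y1 hy1
      have b2 := hel y2 hy2
      have b3 := hel y3 hy3
      have : y1 = a + 1 := by omega
      have : y2 = a + 2 := by omega
      have : y3 = a + 3 := by omega
      subst this; subst ‹y2 = a + 2›; subst ‹y1 = a + 1›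
      rw [Finset.mem_erase, Finset.mem_erase] at hy1 hy2 hy3
      refine hok (a+1) ⟨hy1.2.2, ?_, ?_⟩
      · rw [Nat.mod_eq_of_lt (by omega)]; exact hy2.2.2
      · rw [show a+1+2 = a+3 by omega, Nat.mod_eq_of_lt (by omega)]; exact hy3.2.2
  · intro t ht
    rw [mem_SlN] at ht
    obtain ⟨hsub, hcard, hok⟩ := ht
    have hmem : ∀ x, x ∈ insert (n-1) (insert (n-2) (t.image (· + 1))) ↔
        x = n-1 ∨ x = n-2 ∨ ∃ y ∈ t, y + 1 = x := by
      intro x; simp [Finset.mem_insert, Finset.mem_image]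
    have hbd : ∀ x, x ∈ insert (n-1) (insert (n-2) (t.image (· + 1))) →
        x = n-1 ∨ x = n-2 ∨ (1 ≤ x ∧ x ≤ n-4) := by
      intro x hx
      rcases (hmem x).mp hx with h | h | ⟨y, hy, rfl⟩
      · exact Or.inl h
      · exact Or.inr (Or.inl h)
      · have := hsub y hy; right; right; omega
    have hni2 : (n-2) ∉ t.image (· + 1) := by
      rw [Finset.mem_image]
      rintro ⟨y, hy, e⟩
      have := hsub y hy
      omega
    have hni1 : (n-1) ∉ insert (n-2) (t.image (· + 1)) := by
      rw [Finset.mem_insert, Finset.mem_image]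
      rintro (h | ⟨y, hy, e⟩)
      · omega
      · have := hsub y hy; omega
    simp only [Finset.mem_filter, mem_ScN]
    refine ⟨⟨?_, ?_, ?_⟩, ?_, ?_⟩
    · intro x hx
      rcases hbd x hx with h | h | h <;> omega
    · rw [Finset.card_insert_of_notMem hni1, Finset.card_insert_of_notMem hni2,
        Finset.card_image_of_injective _ (add_left_injective 1), hcard]
      omega
    · rintro a ⟨h1, h2, h3⟩
      rcases hbd a h1 with rfl | rfl | ⟨ha1, ha2⟩
      · have e : (n-1+1) % n = 0 := by rw [show n-1+1 = n by omega, Nat.mod_self]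
        rw [e] at h2
        rcases hbd 0 h2 with h | h | h <;> omega
      · have e : (n-2+2) % n = 0 := by rw [show n-2+2 = n by omega, Nat.mod_self]
        rw [e] at h3
        rcases hbd 0 h3 with h | h | h <;> omega
      · have e1 : (a+1) % n = a+1 := Nat.mod_eq_of_lt (by omega)
        have e2 : (a+2) % n = a+2 := Nat.mod_eq_of_lt (by omega)
        rw [e1] at h2; rw [e2] at h3
        rcases hbd _ h2 with hb | hb | hb
        · omega
        · omega
        rcases hbd _ h3 with hc | hc | hc
        · omega
        · omega
        have m1 : ∃ y ∈ t, y + 1 = a := by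
          rcases (hmem a).mp h1 with h | h | h
          · omega
          · omega
          · exact h
        have m2 : ∃ y ∈ t, y + 1 = a + 1 := by
          rcases (hmem _).mp h2 with h | h | h
          · omega
          · omega
          · exact h
        have m3 : ∃ y ∈ t, y + 1 = a + 2 := by
          rcases (hmem _).mp h3 with h | h | h
          · omega
          · omega
          · exact h
        obtain ⟨y1, hy1, e1'⟩ := m1
        obtain ⟨y2, hy2, e2'⟩ := m2
        obtain ⟨y3, hy3, e3'⟩ := m3
        refine hok (a-1) ⟨by rwa [show a-1 = y1 by omega], ?_, ?_⟩
        · rwa [show a-1+1 = y2 by omega]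
        · rwa [show a-1+2 = y3 by omega]
    · exact Finset.mem_insert_self _ _
    · exact Finset.mem_insert_of_mem (Finset.mem_insert_self _ _)
  · intro s hs
    simp only [Finset.mem_filter, mem_ScN] at hs
    obtain ⟨⟨hsub, hcard, hok⟩, hm1, hm2⟩ := hs
    have h0 : (0:ℕ) ∉ s := fun h => hok (n-2) ⟨hm2,
      by rw [show n-2+1 = n-1 by omega, Nat.mod_eq_of_lt (by omega)]; exact hm1,
      by rw [show n-2+2 = n by omega, Nat.mod_self]; exact h⟩
    show insert (n-1) (insert (n-2)
      ((((s.erase (n-1)).erase (n-2)).image (· - 1)).image (· + 1))) = s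
    rw [image_sub_add 1 _ (fun x hx => by
      rw [Finset.mem_erase, Finset.mem_erase] at hx
      have : x ≠ 0 := fun h => h0 (h ▸ hx.2.2)
      omega)]
    rw [Finset.insert_erase (Finset.mem_erase.mpr ⟨by omega, hm2⟩),
      Finset.insert_erase hm1]
  · intro t ht
    rw [mem_SlN] at ht
    have hni2 : (n-2) ∉ t.image (· + 1) := by
      rw [Finset.mem_image]
      rintro ⟨y, hy, e⟩
      have := ht.1 y hy
      omega
    have hni1 : (n-1) ∉ insert (n-2) (t.image (· + 1)) := by
      rw [Finset.mem_insert, Finset.mem_image]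
      rintro (h | ⟨y, hy, e⟩)
      · omega
      · have := ht.1 y hy; omega
    show (((insert (n-1) (insert (n-2) (t.image (· + 1)))).erase (n-1)).erase
      (n-2)).image (· - 1) = t
    rw [Finset.erase_insert hni1, Finset.erase_insert hni2, image_add_sub]

open Classical in
private lemma caseD (n k : ℕ) (hn : 4 ≤ n) (hk : 2 ≤ k) :
    ((ScN n k).filter (fun s => (n-1) ∈ s ∧ (n-2) ∉ s ∧ (0:ℕ) ∈ s)).card
      = (SlN (n-4) (k-2)).card := by
  refine Finset.card_bij' (fun s _ => ((s.erase (n-1)).erase 0).image (· - 2))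
    (fun t _ => insert (n-1) (insert 0 (t.image (· + 2)))) ?_ ?_ ?_ ?_
  · intro s hs
    simp only [Finset.mem_filter, mem_ScN] at hs
    obtain ⟨⟨hsub, hcard, hok⟩, hm1, hm2, hm0⟩ := hs
    have h1n : (1:ℕ) ∉ s := fun h => hok (n-1) ⟨hm1,
      by rw [show n-1+1 = n by omega, Nat.mod_self]; exact hm0,
      by rw [show n-1+2 = n+1 by omega, Nat.add_mod_left,
        Nat.mod_eq_of_lt (by omega)]; exact h⟩
    have hel : ∀ x ∈ (s.erase (n-1)).erase 0, 2 ≤ x ∧ x ≤ n - 3 := by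
      intro x hx
      rw [Finset.mem_erase, Finset.mem_erase] at hx
      obtain ⟨hx0, hx1, hxs⟩ := hx
      have := hsub x hxs
      have : x ≠ 1 := fun h => h1n (h ▸ hxs)
      have : x ≠ n-2 := fun h => hm2 (h ▸ hxs)
      omega
    rw [mem_SlN]
    refine ⟨?_, ?_, ?_⟩
    · intro x hx
      rw [Finset.mem_image] at hx
      obtain ⟨y, hy, rfl⟩ := hx
      have := hel y hy
      omega
    · rw [Finset.card_image_of_injOn (sub_injOn 2 _ (fun x hx => (hel x hx).1)),
        Finset.card_erase_of_mem (Finset.mem_erase.mpr ⟨by omega, hm0⟩),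
        Finset.card_erase_of_mem hm1, hcard]
      omega
    · rintro a ⟨h1, h2, h3'⟩
      rw [Finset.mem_image] at h1 h2 h3'
      obtain ⟨y1, hy1, e1⟩ := h1
      obtain ⟨y2, hy2, e2⟩ := h2
      obtain ⟨y3, hy3, e3⟩ := h3'
      have b1 := hel y1 hy1
      have b2 := hel y2 hy2
      have b3 := hel y3 hy3
      have : y1 = a + 2 := by omega
      have : y2 = a + 3 := by omega
      have : y3 = a + 4 := by omega
      subst this; subst ‹y2 = a + 3›; subst ‹y1 = a + 2›
      rw [Finset.mem_erase, Finset.mem_erase] at hy1 hy2 hy3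
      refine hok (a+2) ⟨hy1.2.2, ?_, ?_⟩
      · rw [show a+2+1 = a+3 by omega, Nat.mod_eq_of_lt (by omega)]; exact hy2.2.2
      · rw [show a+2+2 = a+4 by omega, Nat.mod_eq_of_lt (by omega)]; exact hy3.2.2
  · intro t ht
    rw [mem_SlN] at ht
    obtain ⟨hsub, hcard, hok⟩ := ht
    have hmem : ∀ x, x ∈ insert (n-1) (insert 0 (t.image (· + 2))) ↔
        x = n-1 ∨ x = 0 ∨ ∃ y ∈ t, y + 2 = x := by
      intro x; simp [Finset.mem_insert, Finset.mem_image]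
    have hbd : ∀ x, x ∈ insert (n-1) (insert 0 (t.image (· + 2))) →
        x = n-1 ∨ x = 0 ∨ (2 ≤ x ∧ x ≤ n-3) := by
      intro x hx
      rcases (hmem x).mp hx with h | h | ⟨y, hy, rfl⟩
      · exact Or.inl h
      · exact Or.inr (Or.inl h)
      · have := hsub y hy; right; right; omega
    have hni2 : (0:ℕ) ∉ t.image (· + 2) := by
      rw [Finset.mem_image]
      rintro ⟨y, hy, e⟩
      omega
    have hni1 : (n-1) ∉ insert 0 (t.image (· + 2)) := by
      rw [Finset.mem_insert, Finset.mem_image]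
      rintro (h | ⟨y, hy, e⟩)
      · omega
      · have := hsub y hy; omega
    simp only [Finset.mem_filter, mem_ScN]
    refine ⟨⟨?_, ?_, ?_⟩, ?_, ?_, ?_⟩
    · intro x hx
      rcases hbd x hx with h | h | h <;> omega
    · rw [Finset.card_insert_of_notMem hni1, Finset.card_insert_of_notMem hni2,
        Finset.card_image_of_injective _ (add_left_injective 2), hcard]
      omega
    · rintro a ⟨h1, h2, h3⟩
      rcases hbd a h1 with rfl | rfl | ⟨ha1, ha2⟩
      · have e : (n-1+2) % n = 1 := by
          rw [show n-1+2 = n+1 by omega, Nat.add_mod_left, Nat.mod_eq_of_lt (by omega)]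
        rw [e] at h3
        rcases hbd 1 h3 with h | h | h <;> omega
      · have e : (0+1) % n = 1 := Nat.mod_eq_of_lt (by omega)
        rw [e] at h2
        rcases hbd 1 h2 with h | h | h <;> omega
      · have e1 : (a+1) % n = a+1 := Nat.mod_eq_of_lt (by omega)
        have e2 : (a+2) % n = a+2 := Nat.mod_eq_of_lt (by omega)
        rw [e1] at h2; rw [e2] at h3
        rcases hbd _ h2 with hb | hb | hb
        · omega
        · omega
        rcases hbd _ h3 with hc | hc | hc
        · omega
        · omega
        have m1 : ∃ y ∈ t, y + 2 = a := by
          rcases (hmem a).mp h1 with h | h | h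
          · omega
          · omega
          · exact h
        have m2 : ∃ y ∈ t, y + 2 = a + 1 := by
          rcases (hmem _).mp h2 with h | h | h
          · omega
          · omega
          · exact h
        have m3 : ∃ y ∈ t, y + 2 = a + 2 := by
          rcases (hmem _).mp h3 with h | h | h
          · omega
          · omega
          · exact h
        obtain ⟨y1, hy1, e1'⟩ := m1
        obtain ⟨y2, hy2, e2'⟩ := m2
        obtain ⟨y3, hy3, e3'⟩ := m3
        refine hok (a-2) ⟨by rwa [show a-2 = y1 by omega], ?_, ?_⟩
        · rwa [show a-2+1 = y2 by omega]
        · rwa [show a-2+2 = y3 by omega]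
    · exact Finset.mem_insert_self _ _
    · intro h
      rcases hbd _ h with h' | h' | h' <;> omega
    · exact Finset.mem_insert_of_mem (Finset.mem_insert_self _ _)
  · intro s hs
    simp only [Finset.mem_filter, mem_ScN] at hs
    obtain ⟨⟨hsub, hcard, hok⟩, hm1, hm2, hm0⟩ := hs
    have h1n : (1:ℕ) ∉ s := fun h => hok (n-1) ⟨hm1,
      by rw [show n-1+1 = n by omega, Nat.mod_self]; exact hm0,
      by rw [show n-1+2 = n+1 by omega, Nat.add_mod_left,
        Nat.mod_eq_of_lt (by omega)]; exact h⟩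
    show insert (n-1) (insert 0
      ((((s.erase (n-1)).erase 0).image (· - 2)).image (· + 2))) = s
    rw [image_sub_add 2 _ (fun x hx => by
      rw [Finset.mem_erase, Finset.mem_erase] at hx
      have : x ≠ 1 := fun h => h1n (h ▸ hx.2.2)
      omega)]
    rw [Finset.insert_erase (Finset.mem_erase.mpr ⟨by omega, hm0⟩),
      Finset.insert_erase hm1]
  · intro t ht
    rw [mem_SlN] at ht
    have hni2 : (0:ℕ) ∉ t.image (· + 2) := by
      rw [Finset.mem_image]
      rintro ⟨y, hy, e⟩
      omega
    have hni1 : (n-1) ∉ insert 0 (t.image (· + 2)) := by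
      rw [Finset.mem_insert, Finset.mem_image]
      rintro (h | ⟨y, hy, e⟩)
      · omega
      · have := ht.1 y hy; omega
    show (((insert (n-1) (insert 0 (t.image (· + 2)))).erase (n-1)).erase
      0).image (· - 2) = t
    rw [Finset.erase_insert hni1, Finset.erase_insert hni2, image_add_sub]

private lemma lin_count (m j : ℕ) : linNoThree m j = (SlN m j).card := by
  classical
  unfold linNoThree
  refine Finset.card_bij (fun s _ => s.map ⟨Fin.val, Fin.val_injective⟩) ?_ ?_ ?_
  · intro s hs
    simp only [Finset.mem_filter, Finset.mem_univ, true_and] at hs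
    rw [mem_SlN]
    refine ⟨?_, ?_, ?_⟩
    · intro x hx
      simp only [Finset.mem_map, Function.Embedding.coeFn_mk] at hx
      obtain ⟨a, -, rfl⟩ := hx
      exact a.isLt
    · rw [Finset.card_map]; exact hs.1
    · rintro a ⟨h1, h2, h3⟩
      simp only [Finset.mem_map, Function.Embedding.coeFn_mk] at h1 h2 h3
      obtain ⟨x, hx, rfl⟩ := h1
      obtain ⟨y, hy, hy'⟩ := h2
      obtain ⟨z, hz, hz'⟩ := h3
      exact hs.2 ⟨x, hx, y, hy, z, hz, hy', hz'⟩
  · intro s1 h1 s2 h2 h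
    exact Finset.map_injective _ h
  · intro t ht
    rw [mem_SlN] at ht
    have hlt : ∀ x ∈ t, x < m := ht.1
    have hmap : (t.attachFin hlt).map ⟨Fin.val, Fin.val_injective⟩ = t := by
      ext x
      simp only [Finset.mem_map, Function.Embedding.coeFn_mk]
      constructor
      · rintro ⟨a, ha, rfl⟩
        exact (Finset.mem_attachFin hlt).mp ha
      · intro hx
        exact ⟨⟨x, hlt x hx⟩, (Finset.mem_attachFin hlt).mpr hx, rfl⟩
    refine ⟨t.attachFin hlt, ?_, hmap⟩
    simp only [Finset.mem_filter, Finset.mem_univ, true_and]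
    constructor
    · have hc := congrArg Finset.card hmap
      rw [Finset.card_map] at hc
      rw [hc]; exact ht.2.1
    · rintro ⟨a, ha, b, hb, c, hc, hab, hac⟩
      rw [Finset.mem_attachFin] at ha hb hc
      exact ht.2.2 ↑a ⟨ha, by rw [← hab]; exact hb, by rw [← hac]; exact hc⟩

private lemma circ_count (n k : ℕ) : circNoThree n k = (ScN n k).card := by
  classical
  unfold circNoThree
  refine Finset.card_bij (fun s _ => s.map ⟨Fin.val, Fin.val_injective⟩) ?_ ?_ ?_
  · intro s hs
    simp only [Finset.mem_filter, Finset.mem_univ, true_and] at hs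
    rw [mem_ScN]
    refine ⟨?_, ?_, ?_⟩
    · intro x hx
      simp only [Finset.mem_map, Function.Embedding.coeFn_mk] at hx
      obtain ⟨a, -, rfl⟩ := hx
      exact a.isLt
    · rw [Finset.card_map]; exact hs.1
    · rintro a ⟨h1, h2, h3⟩
      simp only [Finset.mem_map, Function.Embedding.coeFn_mk] at h1 h2 h3
      obtain ⟨x, hx, rfl⟩ := h1
      obtain ⟨y, hy, hy'⟩ := h2
      obtain ⟨z, hz, hz'⟩ := h3
      exact hs.2 ⟨x, hx, y, hy, z, hz, hy', hz'⟩
  · intro s1 h1 s2 h2 h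
    exact Finset.map_injective _ h
  · intro t ht
    rw [mem_ScN] at ht
    have hlt : ∀ x ∈ t, x < n := ht.1
    have hmap : (t.attachFin hlt).map ⟨Fin.val, Fin.val_injective⟩ = t := by
      ext x
      simp only [Finset.mem_map, Function.Embedding.coeFn_mk]
      constructor
      · rintro ⟨a, ha, rfl⟩
        exact (Finset.mem_attachFin hlt).mp ha
      · intro hx
        exact ⟨⟨x, hlt x hx⟩, (Finset.mem_attachFin hlt).mpr hx, rfl⟩
    refine ⟨t.attachFin hlt, ?_, hmap⟩
    simp only [Finset.mem_filter, Finset.mem_univ, true_and]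
    constructor
    · have hc := congrArg Finset.card hmap
      rw [Finset.card_map] at hc
      rw [hc]; exact ht.2.1
    · rintro ⟨a, ha, b, hb, c, hc, hab, hac⟩
      rw [Finset.mem_attachFin] at ha hb hc
      exact ht.2.2 ↑a ⟨ha, by rw [← hab]; exact hb, by rw [← hac]; exact hc⟩

private lemma card_split4 {α : Type*} (T : Finset α) (p q r : α → Prop)
    [DecidablePred p] [DecidablePred q] [DecidablePred r] :
    T.card = (T.filter fun s => ¬ p s).card + (T.filter fun s => p s ∧ q s).card
      + (T.filter fun s => p s ∧ ¬ q s ∧ r s).card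
      + (T.filter fun s => p s ∧ ¬ q s ∧ ¬ r s).card := by
  classical
  have h1 : T.card = (T.filter p).card + (T.filter fun s => ¬ p s).card :=
    (Finset.card_filter_add_card_filter_not (p := p)).symm
  have h2 : (T.filter p).card = ((T.filter p).filter q).card
      + ((T.filter p).filter fun s => ¬ q s).card :=
    (Finset.card_filter_add_card_filter_not (p := q)).symm
  have e2 : (T.filter p).filter q = T.filter fun s => p s ∧ q s :=
    Finset.filter_filter _ _ _
  have e2' : ((T.filter p).filter fun s => ¬ q s) = T.filter fun s => p s ∧ ¬ q s :=
    Finset.filter_filter _ _ _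
  have h3 : (T.filter fun s => p s ∧ ¬ q s).card
      = ((T.filter fun s => p s ∧ ¬ q s).filter r).card
      + ((T.filter fun s => p s ∧ ¬ q s).filter fun s => ¬ r s).card :=
    (Finset.card_filter_add_card_filter_not (p := r)).symm
  have e3 : (T.filter fun s => p s ∧ ¬ q s).filter r
      = T.filter fun s => p s ∧ ¬ q s ∧ r s := by
    rw [Finset.filter_filter]
    exact Finset.filter_congr fun x _ => by tauto
  have e3' : ((T.filter fun s => p s ∧ ¬ q s).filter fun s => ¬ r s)
      = T.filter fun s => p s ∧ ¬ q s ∧ ¬ r s := by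
    rw [Finset.filter_filter]
    exact Finset.filter_congr fun x _ => by tauto
  rw [e2, e2'] at h2
  rw [e3, e3'] at h3
  omega


/-- For `n ≥ 4` and `k ≥ 2`,
`R(n,k) = L(n-1,k) + 2·L(n-4,k-2) + L(n-3,k-1)`. -/
theorem circNoThree_eq (n k : ℕ) (hn : 4 ≤ n) (hk : 2 ≤ k) :
    circNoThree n k =
      linNoThree (n - 1) k + 2 * linNoThree (n - 4) (k - 2) +
        linNoThree (n - 3) (k - 1) := by
  classical
  rw [circ_count, lin_count, lin_count, lin_count]
  have hsplit := card_split4 (ScN n k) (fun s => (n-1) ∈ s)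
    (fun s => (n-2) ∈ s) (fun s => (0:ℕ) ∈ s)
  rw [caseA n k hn, caseC n k hn hk, caseD n k hn hk, caseB n k hn hk] at hsplit
  omega
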